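/- Let (X, d_X, μ_X) be a complete separable metric space which is geometrically doubling (there is λ ∈ ℕ such that every ball B(x, r) can be covered by at most λ balls of radius r/2), equipped with a Borel regular measure μ_X finite on every ball, and let (Y, d_Y, μ_Y) be a separable metric space with a measure μ_Y. Suppose f : X → Y is a μ_X-measurable mapping satisfying the Luzin N-property: μ_Y(f(E)) = 0 (in outer measure) whenever E ⊆ X has μ_X(E) = 0. Then for every μ_X-measurable set A ⊆ X (not necessarily Borel), f can be redefined on a set of μ_X-measure zero so that the Banach indicatrix y ↦ N(y, f, A) is a μ_Y-measurable function. -/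

import Mathlib

open MeasureTheory

def GeometricallyDoubling (X : Type*) [PseudoMetricSpace X] : Prop :=
  ∃ n : ℕ, ∀ (x : X) (r : ℝ), ∃ s : Finset X,
    s.card ≤ n ∧ Metric.ball x r ⊆ ⋃ c ∈ s, Metric.ball c (r / 2)

def MuMeasurableMap {X Y : Type*} [MeasurableSpace X] [TopologicalSpace Y]
    (μ : Measure X) (f : X → Y) : Prop :=
  ∀ E : Set Y, IsOpen E → NullMeasurableSet (f ⁻¹' E) μ

noncomputable def banachIndicatrix {X Y : Type*} (f : X → Y) (A : Set X) (y : Y) : ℕ∞ :=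
  (A ∩ f ⁻¹' {y}).encard

/-!
Replace `f` by a Borel map `f₀` equal to it almost everywhere, and refine the Polish topology of
`X` so that `f₀` becomes continuous without changing the Borel sets. Up to a null set `Z`, `A` is
then σ-compact, so for every open `V` the image `f₀ '' ((A \ Z) ∩ V)` is σ-compact, hence Borel.
Since `n ≤ N(y)` exactly when `y` lies in the images of `n` pairwise disjoint basic open sets,
the indicatrix of `A \ Z` is Borel. Redefining `f₀` as a constant on `Z` changes the indicatrix of
`A` only at that constant.
-/

open Set TopologicalSpace

theorem ENat.measurable_of_forall_measurableSet_le {α : Type*} [MeasurableSpace α] {f : α → ℕ∞}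
    (h : ∀ n : ℕ, MeasurableSet {a | (n : ℕ∞) ≤ f a}) : Measurable f := by
  refine ENat.measurable_iff.2 fun n => ?_
  have : f ⁻¹' {(n : ℕ∞)} = {a | (n : ℕ∞) ≤ f a} \ {a | ((n + 1 : ℕ) : ℕ∞) ≤ f a} := by
    ext a
    simp only [mem_preimage, mem_singleton_iff, mem_sdiff, mem_ofPred_eq, not_le, Nat.cast_add,
      Nat.cast_one, ENat.lt_add_one_iff (ENat.natCast_ne_top n)]
    exact ⟨fun h => ⟨h.ge, h.le⟩, fun h => le_antisymm h.2 h.1⟩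
  rw [this]
  exact (h n).diff (h (n + 1))

section Indicatrix

variable {X Y : Type*} {f : X → Y} {S : Set X} {y : Y}

theorem encard_le_banachIndicatrix {t : Set (Set X)} (ht : t.PairwiseDisjoint id)
    (hy : ∀ V ∈ t, y ∈ f '' (S ∩ V)) : t.encard ≤ banachIndicatrix f S y := by
  rcases t.eq_empty_or_nonempty with rfl | ⟨V₀, hV₀⟩
  · simp
  have : Nonempty X := ⟨(hy V₀ hV₀).choose⟩
  choose! x hxS hfx using hy
  refine encard_le_encard_of_injOn (fun V hV => ⟨(hxS V hV).1, hfx V hV⟩) fun V hV W hW hVW => ?_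
  exact ht.elim_set hV hW (x V) (hxS V hV).2 (hVW ▸ (hxS W hW).2)

variable [TopologicalSpace X] [T2Space X] {b : Set (Set X)}

theorem le_banachIndicatrix_iff (hb : IsTopologicalBasis b) (n : ℕ) :
    (n : ℕ∞) ≤ banachIndicatrix f S y ↔ ∃ t ⊆ b, t.Finite ∧ t.PairwiseDisjoint id ∧
      (n : ℕ∞) ≤ t.encard ∧ ∀ V ∈ t, y ∈ f '' (S ∩ V) := by
  refine ⟨fun h => ?_, fun ⟨t, _, _, ht, hn, hy⟩ => hn.trans (encard_le_banachIndicatrix ht hy)⟩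
  obtain ⟨P, hPfib, hPn⟩ := exists_subset_encard_eq h
  have hPfin : P.Finite := finite_of_encard_eq_coe hPn
  obtain ⟨U, hU, hPU⟩ := hPfin.t2_separation
  choose W hWb hxW hWU using fun x => hb.exists_subset_of_mem_open (hU x).1 (hU x).2
  have hW : P.PairwiseDisjoint W := hPU.mono fun x => hWU x
  have hWinj : InjOn W P := fun x hx x' hx' h => hW.elim_set hx hx' x (hxW x) (h ▸ hxW x)
  refine ⟨W '' P, image_subset_iff.2 fun x _ => hWb x, hPfin.image W, ?_, ?_, ?_⟩
  · rintro _ ⟨x, hx, rfl⟩ _ ⟨x', hx', rfl⟩ hne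
    exact hW hx hx' fun h => hne (h ▸ rfl)
  · rw [hWinj.encard_image, hPn]
  · rintro _ ⟨x, hx, rfl⟩
    exact ⟨x, ⟨(hPfib hx).1, hxW x⟩, (hPfib hx).2⟩

theorem measurable_banachIndicatrix_of_measurableSet_image [SecondCountableTopology X]
    [MeasurableSpace Y] (h : ∀ V, IsOpen V → MeasurableSet (f '' (S ∩ V))) :
    Measurable (banachIndicatrix f S) := by
  obtain ⟨b, hbc, -, hb⟩ := exists_countable_basis X
  refine ENat.measurable_of_forall_measurableSet_le fun n => ?_
  have : {y | (n : ℕ∞) ≤ banachIndicatrix f S y} = ⋃ t ∈ {t | t ⊆ b ∧ t.Finite ∧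
      t.PairwiseDisjoint id ∧ (n : ℕ∞) ≤ t.encard}, ⋂ V ∈ t, f '' (S ∩ V) := by
    ext y
    simp only [mem_ofPred_eq, le_banachIndicatrix_iff hb, mem_iUnion, mem_iInter, exists_prop,
      and_assoc]
  rw [this]
  refine .biUnion ((countable_ofPred_finite_subset hbc).mono fun t ht => by exact ⟨ht.2.1, ht.1⟩)
    fun t ht => .biInter ht.2.1.countable fun V hV => h V (hb.isOpen (ht.1 hV))

end Indicatrix

theorem IsSigmaCompact.inter_isOpen {X : Type*} [TopologicalSpace X] [PerfectlyNormalSpace X]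
    {S V : Set X} (hS : IsSigmaCompact S) (hV : IsOpen V) : IsSigmaCompact (S ∩ V) := by
  obtain ⟨K, hK, rfl⟩ := hS
  obtain ⟨U, hU, hVU⟩ := isGδ_iff_eq_iInter_nat.1 hV.isClosed_compl.isGδ
  have : (⋃ n, K n) ∩ V = ⋃ p : ℕ × ℕ, K p.1 \ U p.2 := by
    rw [← compl_compl V, hVU, compl_iInter]
    ext x
    simp
  rw [this]
  exact isSigmaCompact_iUnion_of_isCompact _ fun p => (hK p.1).diff (hU p.2)

theorem IsSigmaCompact.measurableSet {X : Type*} [TopologicalSpace X] [T2Space X]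
    [MeasurableSpace X] [OpensMeasurableSpace X] {S : Set X} (hS : IsSigmaCompact S) :
    MeasurableSet S := by
  obtain ⟨K, hK, rfl⟩ := hS
  exact .iUnion fun n => (hK n).measurableSet

theorem Continuous.measurable_banachIndicatrix {X Y : Type*} [TopologicalSpace X]
    [MetrizableSpace X] [SecondCountableTopology X] [TopologicalSpace Y] [T2Space Y]
    [MeasurableSpace Y] [OpensMeasurableSpace Y] {f : X → Y} (hf : Continuous f) {S : Set X}
    (hS : IsSigmaCompact S) : Measurable (banachIndicatrix f S) :=
  measurable_banachIndicatrix_of_measurableSet_image fun _ hV =>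
    ((hS.inter_isOpen hV).image hf).measurableSet

theorem measurable_banachIndicatrix_piecewise_const {X Y : Type*} [MeasurableSpace Y]
    [MeasurableSingletonClass Y] {f : X → Y} {A N : Set X} [DecidablePred (· ∈ N)] (c : Y)
    (hf : Measurable (banachIndicatrix f (A \ N))) :
    Measurable (banachIndicatrix (N.piecewise (fun _ => c) f) A) := by
  classical
  set g := N.piecewise (fun _ => c) f
  have : banachIndicatrix g A =
      fun y => if y = c then banachIndicatrix g A c else banachIndicatrix f (A \ N) y := by
    funext y
    split_ifs with hy
    · rw [hy]
    · unfold banachIndicatrix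
      congr 1
      ext x
      by_cases hx : x ∈ N <;> simp [g, hx, Ne.symm hy]
  rw [this]
  exact measurable_const.ite measurableSet_eq hf

theorem MeasureTheory.NullMeasurableSet.exists_isSigmaCompact_subset_measure_sdiff_eq_zero
    {X : Type*} [TopologicalSpace X] [T2Space X] [MeasurableSpace X] [OpensMeasurableSpace X]
    {μ : Measure X} [μ.InnerRegularCompactLTTop] [SigmaFinite μ] {A : Set X}
    (hA : NullMeasurableSet A μ) : ∃ S ⊆ A, IsSigmaCompact S ∧ μ (A \ S) = 0 := by
  obtain ⟨B, hBA, hB, hBae⟩ := hA.exists_measurable_subset_ae_eq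
  have hfin (n : ℕ) : μ (B ∩ spanningSets μ n) ≠ ⊤ :=
    ((measure_mono inter_subset_right).trans_lt (measure_spanningSets_lt_top μ n)).ne
  choose K hKB hK hKμ using fun p : ℕ × ℕ =>
    (hB.inter (measurableSet_spanningSets μ p.1)).exists_isCompact_sdiff_lt (hfin p.1)
      (ENNReal.inv_ne_zero.2 (ENNReal.natCast_ne_top p.2))
  refine ⟨⋃ p, K p, iUnion_subset fun p => (hKB p).trans (inter_subset_left.trans hBA),
    isSigmaCompact_iUnion_of_isCompact K hK, ?_⟩
  have hBK (n : ℕ) : μ ((B ∩ spanningSets μ n) \ ⋃ p, K p) = 0 := by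
    by_contra h
    obtain ⟨m, hm⟩ := ENNReal.exists_inv_nat_lt h
    exact (hm.trans_le (measure_mono (sdiff_subset_sdiff_right (subset_iUnion K (n, m))))).trans
      (hKμ (n, m)) |>.false
  have hAB : μ (A \ B) = 0 := (ae_eq_set.1 hBae).2
  refine measure_mono_null (fun x ⟨hxA, hxK⟩ => ?_) (measure_union_null hAB
    (measure_iUnion_null hBK))
  by_cases hxB : x ∈ B
  · obtain ⟨n, hn⟩ := mem_iUnion.1 ((iUnion_spanningSets μ).symm ▸ mem_univ x)
    exact Or.inr (mem_iUnion.2 ⟨n, ⟨hxB, hn⟩, hxK⟩)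
  · exact Or.inl ⟨hxA, hxB⟩

theorem Continuous.exists_subset_measure_sdiff_eq_zero_measurable_banachIndicatrix
    {X Y : Type*} [TopologicalSpace X] [PolishSpace X] [MeasurableSpace X] [BorelSpace X]
    [TopologicalSpace Y] [T2Space Y] [MeasurableSpace Y] [OpensMeasurableSpace Y]
    {μ : Measure X} [SigmaFinite μ] {f : X → Y} (hf : Continuous f) {A : Set X}
    (hA : NullMeasurableSet A μ) :
    ∃ S ⊆ A, μ (A \ S) = 0 ∧ Measurable (banachIndicatrix f S) := by
  obtain ⟨S, hSA, hS, hAS⟩ := hA.exists_isSigmaCompact_subset_measure_sdiff_eq_zero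
  exact ⟨S, hSA, hAS, hf.measurable_banachIndicatrix hS⟩

theorem Measurable.exists_subset_measure_sdiff_eq_zero_measurable_banachIndicatrix
    {X Y : Type*} [TopologicalSpace X] [hX : PolishSpace X] [MeasurableSpace X]
    [hXB : BorelSpace X] [TopologicalSpace Y] [T2Space Y] [SecondCountableTopology Y]
    [MeasurableSpace Y] [OpensMeasurableSpace Y] {μ : Measure X} [SigmaFinite μ] {f : X → Y}
    (hf : Measurable f) {A : Set X} (hA : NullMeasurableSet A μ) :
    ∃ S ⊆ A, μ (A \ S) = 0 ∧ Measurable (banachIndicatrix f S) := by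
  obtain ⟨t', ht', hft', ht'P⟩ := hf.exists_continuous
  have ht'B : @BorelSpace X t' _ :=
    ⟨hXB.measurable_eq.trans (borel_eq_borel_of_le ht'P hX ht').symm⟩
  exact @Continuous.exists_subset_measure_sdiff_eq_zero_measurable_banachIndicatrix X Y t' ht'P
    _ ht'B _ _ _ _ μ _ f hft' A hA

theorem MuMeasurableMap.nullMeasurable {X Y : Type*} [MeasurableSpace X] [TopologicalSpace Y]
    [MeasurableSpace Y] [BorelSpace Y] {μ : Measure X} {f : X → Y} (hf : MuMeasurableMap μ f) :
    NullMeasurable f μ :=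
  @measurable_of_isOpen Y (NullMeasurableSpace X μ) _ _ _ _ f hf

theorem banachIndicatrix_nullMeasurable_of_luzinN_general
    {X Y : Type*}
    [MetricSpace X] [CompleteSpace X] [TopologicalSpace.SeparableSpace X]
    [MeasurableSpace X] [BorelSpace X]
    [MetricSpace Y] [TopologicalSpace.SeparableSpace Y]
    [MeasurableSpace Y] [BorelSpace Y]
    (μX : Measure X) (μY : Measure Y)
    (hballs : ∀ (x : X) (r : ℝ), μX (Metric.ball x r) < ⊤)
    (f : X → Y) (hf : MuMeasurableMap μX f)
    (A : Set X) (hA : NullMeasurableSet A μX) :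
    ∃ g : X → Y, g =ᵐ[μX] f ∧
      NullMeasurable (fun y => banachIndicatrix g A y) μY := by
  classical
  rcases isEmpty_or_nonempty X with hX | ⟨⟨x₀⟩⟩
  · refine ⟨f, .rfl, (measurable_const' fun y y' => ?_).nullMeasurable⟩
    simp [banachIndicatrix, eq_empty_of_isEmpty]
  have : IsLocallyFiniteMeasure μX :=
    ⟨fun x => ⟨_, Metric.ball_mem_nhds x one_pos, hballs x 1⟩⟩
  obtain ⟨f₀, hf₀, hff₀⟩ := hf.nullMeasurable.aemeasurable
  obtain ⟨S, hSA, hAS, hS⟩ :=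
    hf₀.exists_subset_measure_sdiff_eq_zero_measurable_banachIndicatrix hA
  refine ⟨(A \ S).piecewise (fun _ => f₀ x₀) f₀, ?_, ?_⟩
  · have hg : (A \ S).piecewise (fun _ => f₀ x₀) f₀ =ᵐ[μX] f₀ :=
      ae_iff.2 <| measure_mono_null (fun x hx => by_contra fun hxN =>
        hx (piecewise_eq_of_notMem _ _ _ hxN)) hAS
    exact hg.trans hff₀.symm
  · refine (measurable_banachIndicatrix_piecewise_const _ ?_).nullMeasurable
    rwa [sdiff_sdiff_cancel_left hSA]

/-- If a μX-measurable map `f` satisfies the Luzin N-property (images of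
μX-null sets are μY-null in outer measure), then for every μX-measurable set `A` (not
necessarily Borel) `f` can be redefined on a μX-null set so that the Banach indicatrix
`y ↦ N(y, f, A)` is measurable with respect to the completion of `μY`. -/
theorem banachIndicatrix_nullMeasurable_of_luzinN
    {X Y : Type*}
    [MetricSpace X] [CompleteSpace X] [TopologicalSpace.SeparableSpace X]
    [MeasurableSpace X] [BorelSpace X]
    [MetricSpace Y] [TopologicalSpace.SeparableSpace Y]
    [MeasurableSpace Y] [BorelSpace Y]
    (μX : Measure X) (μY : Measure Y)
    (hdoub : GeometricallyDoubling X)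
    (hballs : ∀ (x : X) (r : ℝ), μX (Metric.ball x r) < ⊤)
    (f : X → Y) (hf : MuMeasurableMap μX f)
    (hLuzinN : ∀ E : Set X, μX E = 0 → μY (f '' E) = 0)
    (A : Set X) (hA : NullMeasurableSet A μX) :
    ∃ g : X → Y, g =ᵐ[μX] f ∧
      NullMeasurable (fun y => banachIndicatrix g A y) μY :=
  banachIndicatrix_nullMeasurable_of_luzinN_general μX μY hballs f hf A hA
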